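/- arXiv:1607.06203 — 5 statements merged into one kernel-verified Lean document; each statement's English description precedes it below -/
import Mathlib

section
/- For any finite nonempty subset A of R^d and any ε > 0, there exist points x₁, ..., x_m ∈ A with m = ⌈1/ε⌉ such that μ_m := (x₁ + ... + x_m)/m satisfies Σ_{x∈A} ||x - μ_m||² ≤ (1+ε) Σ_{x∈A} ||x - μ(A)||². -/
open Finset

variable {E : Type*} [NormedAddCommGroup E] [InnerProductSpace ℝ E]

/-- Splitting a sum over tuples in `A` by the first coordinate. -/
lemma sum_piFinset_succ {α : Type*} [DecidableEq α] {β : Type*} [AddCommMonoid β]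
    (A : Finset α) (m : ℕ) (F : (Fin (m+1) → α) → β) :
    ∑ x ∈ Fintype.piFinset (fun _ : Fin (m+1) => A), F x
      = ∑ a ∈ A, ∑ y ∈ Fintype.piFinset (fun _ : Fin m => A), F (Fin.cons a y) := by
  rw [← Finset.sum_product']
  refine Finset.sum_nbij' (fun x => (x 0, Fin.tail x)) (fun p => Fin.cons p.1 p.2) ?_ ?_ ?_ ?_ ?_
  · intro x hx
    simp only [Fintype.mem_piFinset] at hx
    simp [Finset.mem_product, Fintype.mem_piFinset, Fin.tail, hx]
  · rintro ⟨a, y⟩ hp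
    simp only [Finset.mem_product, Fintype.mem_piFinset] at hp
    simp only [Fintype.mem_piFinset]
    intro i
    refine Fin.cases ?_ ?_ i <;> simp [hp.1, hp.2 _]
  · intro x _; exact Fin.cons_self_tail x
  · rintro ⟨a, y⟩ _; simp [Fin.tail_cons]
  · intro x _; rw [Fin.cons_self_tail]

/-- Bias–variance identity. -/
lemma bias_variance (A : Finset E) (μ : E) (h0 : ∑ a ∈ A, (a - μ) = 0) (c : E) :
    ∑ a ∈ A, ‖a - c‖ ^ 2 = (∑ a ∈ A, ‖a - μ‖ ^ 2) + A.card * ‖μ - c‖ ^ 2 := by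
  have : ∀ a : E, ‖a - c‖ ^ 2 = ‖a - μ‖ ^ 2 + 2 * (inner ℝ (a - μ) (μ - c) : ℝ) + ‖μ - c‖ ^ 2 := by
    intro a
    have h : a - c = (a - μ) + (μ - c) := by abel
    rw [h, norm_add_sq_real]
  rw [Finset.sum_congr rfl fun a _ => this a]
  rw [Finset.sum_add_distrib, Finset.sum_add_distrib, ← Finset.mul_sum,
    ← sum_inner, h0, inner_zero_left, mul_zero, add_zero, Finset.sum_const, nsmul_eq_mul]

/-- Second moment of the sum of i.i.d. centered samples. -/
lemma second_moment [DecidableEq E] (A : Finset E) (μ : E) (h0 : ∑ a ∈ A, (a - μ) = 0) :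
    ∀ m : ℕ, (∑ x ∈ Fintype.piFinset (fun _ : Fin m => A), ‖∑ i, (x i - μ)‖ ^ 2) * A.card
      = m * (A.card : ℝ) ^ m * ∑ a ∈ A, ‖a - μ‖ ^ 2 := by
  intro m
  induction m with
  | zero => simp
  | succ m ih =>
    rw [sum_piFinset_succ]
    have step : ∀ a ∈ A, ∀ y ∈ Fintype.piFinset (fun _ : Fin m => A),
        ‖∑ i : Fin (m+1), ((Fin.cons a y : Fin (m+1) → E) i - μ)‖ ^ 2
          = ‖a - μ‖ ^ 2 + 2 * inner ℝ (a - μ) (∑ i, (y i - μ)) + ‖∑ i, (y i - μ)‖ ^ 2 := by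
      intro a _ y _
      rw [Fin.sum_univ_succ]
      simp only [Fin.cons_zero, Fin.cons_succ]
      rw [norm_add_sq_real]
    rw [Finset.sum_congr rfl (fun a ha => Finset.sum_congr rfl (step a ha))]
    have hcard : (Fintype.piFinset (fun _ : Fin m => A)).card = A.card ^ m := by
      simp [Fintype.card_piFinset]
    simp_rw [Finset.sum_add_distrib]
    have h1 : ∑ _a ∈ A, ∑ _y ∈ Fintype.piFinset (fun _ : Fin m => A), (0:ℝ) = 0 := by simp
    have h2 : (∑ a ∈ A, ∑ y ∈ Fintype.piFinset (fun _ : Fin m => A),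
        2 * (inner ℝ (a - μ) (∑ i, (y i - μ)) : ℝ)) = 0 := by
      rw [Finset.sum_comm]
      refine Finset.sum_eq_zero fun y _ => ?_
      rw [← Finset.mul_sum, ← sum_inner, h0, inner_zero_left, mul_zero]
    have h3 : (∑ _a ∈ A, ∑ y ∈ Fintype.piFinset (fun _ : Fin m => A),
        ‖∑ i, (y i - μ)‖ ^ 2) = (A.card : ℝ) *
          ∑ y ∈ Fintype.piFinset (fun _ : Fin m => A), ‖∑ i, (y i - μ)‖ ^ 2 := by
      rw [Finset.sum_const, nsmul_eq_mul]
    have h4 : (∑ a ∈ A, ∑ _y ∈ Fintype.piFinset (fun _ : Fin m => A), ‖a - μ‖ ^ 2)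
        = (A.card : ℝ) ^ m * ∑ a ∈ A, ‖a - μ‖ ^ 2 := by
      rw [Finset.sum_comm, Finset.sum_const, nsmul_eq_mul, hcard]
      push_cast
      ring
    rw [h2, h3, h4]
    generalize hV : (∑ a ∈ A, ‖a - μ‖ ^ 2) = V at ih ⊢
    generalize hT : (∑ x ∈ Fintype.piFinset (fun _ : Fin m => A), ‖∑ i, (x i - μ)‖ ^ 2) = T at ih ⊢
    push_cast [pow_succ]
    linear_combination ((A.card : ℝ)) * ih

set_option maxHeartbeats 1000000

theorem inaba (d : ℕ) (A : Finset (EuclideanSpace ℝ (Fin d))) (hA : A.Nonempty)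
    (ε : ℝ) (hε : 0 < ε) :
    ∃ x : Fin ⌈1/ε⌉₊ → EuclideanSpace ℝ (Fin d), (∀ i, x i ∈ A) ∧
      ∑ a ∈ A, ‖a - ((⌈1/ε⌉₊ : ℝ)⁻¹ • ∑ i, x i)‖ ^ 2 ≤
        (1 + ε) * ∑ a ∈ A, ‖a - (A.card : ℝ)⁻¹ • ∑ y ∈ A, y‖ ^ 2 := by
  classical
  set m := ⌈1/ε⌉₊ with hmdef
  set μ := (A.card : ℝ)⁻¹ • ∑ y ∈ A, y with hμdef
  have hn : 0 < A.card := hA.card_pos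
  have hn' : (0:ℝ) < A.card := by exact_mod_cast hn
  have hm0 : 0 < m := Nat.ceil_pos.2 (by positivity)
  have hm' : (0:ℝ) < m := by exact_mod_cast hm0
  have hme : 1/ε ≤ (m:ℝ) := Nat.le_ceil _
  have h1m : 1 ≤ ε * m := by
    rw [div_le_iff₀ hε] at hme; linarith [hme]
  have h0 : ∑ a ∈ A, (a - μ) = 0 := by
    rw [Finset.sum_sub_distrib, Finset.sum_const, sub_eq_zero, hμdef,
      ← Nat.cast_smul_eq_nsmul ℝ, smul_smul, mul_inv_cancel₀ hn'.ne', one_smul]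
  set V := ∑ a ∈ A, ‖a - μ‖ ^ 2 with hVdef
  have hV0 : 0 ≤ V := Finset.sum_nonneg fun a _ => by positivity
  have key := second_moment A μ h0 m
  have havg : ∃ x ∈ Fintype.piFinset (fun _ : Fin m => A),
      ‖∑ i, (x i - μ)‖ ^ 2 ≤ m * V / A.card := by
    apply Finset.exists_le_of_sum_le (Fintype.piFinset_nonempty.2 fun _ => hA)
    rw [Finset.sum_const, nsmul_eq_mul]
    have hcard : ((Fintype.piFinset fun _ : Fin m => A).card : ℝ) = (A.card : ℝ) ^ m := by
      rw [Fintype.card_piFinset]; push_cast; simp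
    rw [hcard]
    refine le_of_eq (mul_right_cancel₀ hn'.ne' ?_)
    rw [key]
    field_simp
    ring
  obtain ⟨x, hxmem, hxle⟩ := havg
  refine ⟨x, fun i => Fintype.mem_piFinset.1 hxmem i, ?_⟩
  set c := (m:ℝ)⁻¹ • ∑ i, x i with hcdef
  rw [bias_variance A μ h0 c]
  have hS : ∑ i, (x i - μ) = (m:ℝ) • (c - μ) := by
    rw [hcdef, smul_sub, smul_inv_smul₀ hm'.ne', Finset.sum_sub_distrib,
      Finset.sum_const, Finset.card_univ, Fintype.card_fin, ← Nat.cast_smul_eq_nsmul ℝ]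
  have hS2 : ‖∑ i, (x i - μ)‖ ^ 2 = (m:ℝ) ^ 2 * ‖c - μ‖ ^ 2 := by
    rw [hS, norm_smul, Real.norm_eq_abs, abs_of_pos hm', mul_pow]
  have hnorm : ‖μ - c‖ = ‖c - μ‖ := norm_sub_rev μ c
  have hineq : (A.card : ℝ) * ‖μ - c‖ ^ 2 ≤ ε * V := by
    rw [hnorm]
    have h1 : (m:ℝ) ^ 2 * ‖c - μ‖ ^ 2 ≤ m * V / A.card := hS2 ▸ hxle
    have h2 : (A.card : ℝ) * ((m:ℝ) ^ 2 * ‖c - μ‖ ^ 2) ≤ m * V := by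
      rw [← le_div_iff₀' hn']; exact h1.trans_eq (by ring)
    have h3 : (0:ℝ) ≤ ‖c - μ‖ ^ 2 := by positivity
    have h4 : (A.card : ℝ) * ‖c - μ‖ ^ 2 * m ≤ V := by
      refine le_of_mul_le_mul_right ?_ hm'
      nlinarith [h2, hm', h3, hn']
    have h5 : V ≤ ε * m * V := by nlinarith [mul_le_mul_of_nonneg_right h1m hV0]
    refine le_of_mul_le_mul_right ?_ hm'
    nlinarith [h4, h5]
  rw [← hVdef]
  linarith [hineq]
end

section
/- Let (X, D) be a metric space, p ≥ 1, A a finite nonempty subset with designated center c ∈ X, and define κ* := min_{x∈A} D(x,c) / ((1/|A|) Σ_{x∈A} D(x,c)^p)^{1/p} (setting κ* := 0 if the denominator is 0). Then κ* ≤ 1, and there exists y ∈ A with Σ_{x∈A} D(x,y)^p ≤ (1+κ*)^p Σ_{x∈A} D(x,c)^p. -/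
theorem exists_center_kappa {X : Type*} [MetricSpace X] (p : ℝ) (hp : 1 ≤ p)
    (A : Finset X) (hA : A.Nonempty) (c : X)
    (κ : ℝ)
    (hκ : κ = if ((A.card : ℝ)⁻¹ * ∑ x ∈ A, dist x c ^ p) ^ (1/p) = 0 then 0
      else (A.inf' hA fun x => dist x c) /
        ((A.card : ℝ)⁻¹ * ∑ x ∈ A, dist x c ^ p) ^ (1/p)) :
    κ ≤ 1 ∧ ∃ y ∈ A, ∑ x ∈ A, dist x y ^ p ≤ (1 + κ) ^ p * ∑ x ∈ A, dist x c ^ p := by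
  have hp0 : (0:ℝ) < p := lt_of_lt_of_le one_pos hp
  have hip : (0:ℝ) < 1/p := by positivity
  set n : ℝ := (A.card : ℝ) with hn
  have hnpos : (0:ℝ) < n := by
    simp only [hn]
    exact_mod_cast Finset.card_pos.2 hA
  set S : ℝ := ∑ x ∈ A, dist x c ^ p with hS
  have hSnn : 0 ≤ S := Finset.sum_nonneg fun x _ => Real.rpow_nonneg dist_nonneg p
  set m : ℝ := A.inf' hA fun x => dist x c with hm
  obtain ⟨y, hyA, hym⟩ := A.exists_mem_eq_inf' hA fun x => dist x c
  have hym' : m = dist y c := by rw [hm]; exact hym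
  have hmnn : 0 ≤ m := by rw [hym']; exact dist_nonneg
  have hmle : ∀ x ∈ A, m ≤ dist x c := fun x hx => Finset.inf'_le _ hx
  set ψ : ℝ := (n⁻¹ * S) ^ (1/p) with hψ
  have hψnn : 0 ≤ ψ := Real.rpow_nonneg (by positivity) _
  by_cases hz : ψ = 0
  · -- degenerate case: all points coincide with c
    have hκ0 : κ = 0 := by rw [hκ, if_pos hz]
    have hS0 : ∑ x ∈ A, dist x c ^ p = 0 := by
      have h1 : n⁻¹ * S = 0 := by
        by_contra h
        exact ((Real.rpow_ne_zero (by positivity) (ne_of_gt hip)).2 h) hz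
      have hn' : n⁻¹ ≠ 0 := by positivity
      rw [← hS]
      exact (mul_eq_zero.1 h1).resolve_left hn'
    have hterm : ∀ x ∈ A, dist x c = 0 := by
      intro x hx
      have h0 : dist x c ^ p = 0 :=
        (Finset.sum_eq_zero_iff_of_nonneg
          (fun x _ => Real.rpow_nonneg dist_nonneg p)).1 hS0 x hx
      exact ((Real.rpow_eq_zero_iff_of_nonneg dist_nonneg).1 h0).1
    refine ⟨by rw [hκ0]; norm_num, y, hyA, ?_⟩
    have hzero : ∀ x ∈ A, dist x y ^ p = 0 := by
      intro x hx
      have hx0 : dist x c = 0 := hterm x hx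
      have hy0 : dist y c = 0 := hterm y hyA
      have hxy : dist x y = 0 := by
        have := dist_triangle x c y
        rw [hx0, dist_comm c y, hy0] at this
        linarith [dist_nonneg (x := x) (y := y)]
      rw [hxy, Real.zero_rpow (ne_of_gt hp0)]
    rw [Finset.sum_eq_zero hzero]
    positivity
  · -- main case
    have hκv : κ = m / ψ := by rw [hκ, if_neg hz]
    have hψpos : 0 < ψ := lt_of_le_of_ne hψnn (Ne.symm hz)
    -- m ≤ ψ
    have hmψ : m ≤ ψ := by
      have h1 : m ^ p ≤ n⁻¹ * S := by
        have h2 : n * m ^ p ≤ S := by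
          have h3 : ∑ x ∈ A, m ^ p ≤ S :=
            Finset.sum_le_sum fun x hx =>
              Real.rpow_le_rpow hmnn (hmle x hx) (le_of_lt hp0)
          rw [Finset.sum_const, nsmul_eq_mul] at h3
          exact h3
        calc m ^ p = n⁻¹ * (n * m ^ p) := by field_simp
          _ ≤ n⁻¹ * S := by
              apply mul_le_mul_of_nonneg_left h2 (by positivity)
      calc m = (m ^ p) ^ (1/p) := by
              rw [← Real.rpow_mul hmnn, mul_one_div, div_self (ne_of_gt hp0),
                Real.rpow_one]
        _ ≤ (n⁻¹ * S) ^ (1/p) :=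
              Real.rpow_le_rpow (Real.rpow_nonneg hmnn p) h1 (le_of_lt hip)
    have hκ1 : κ ≤ 1 := by
      rw [hκv, div_le_one hψpos]; exact hmψ
    have hκnn : 0 ≤ κ := by rw [hκv]; positivity
    refine ⟨hκ1, y, hyA, ?_⟩
    have htri : ∀ x ∈ A, dist x y ≤ dist x c + m := by
      intro x hx
      calc dist x y ≤ dist x c + dist c y := dist_triangle x c y
        _ = dist x c + m := by rw [dist_comm c y, ← hym']
    set T : ℝ := ∑ x ∈ A, dist x y ^ p with hT
    have hTnn : 0 ≤ T := Finset.sum_nonneg fun x _ => Real.rpow_nonneg dist_nonneg p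
    have h1 : T ≤ ∑ x ∈ A, (dist x c + m) ^ p :=
      Finset.sum_le_sum fun x hx =>
        Real.rpow_le_rpow dist_nonneg (htri x hx) (le_of_lt hp0)
    have hmink : (∑ x ∈ A, (dist x c + m) ^ p) ^ (1/p) ≤
        (∑ x ∈ A, dist x c ^ p) ^ (1/p) + (∑ x ∈ A, m ^ p) ^ (1/p) :=
      Real.Lp_add_le_of_nonneg (f := fun x => dist x c) (g := fun _ => m) A hp
        (fun x _ => dist_nonneg) (fun x _ => hmnn)
    have hSpos : 0 < S := by
      rcases hSnn.lt_or_eq with h | h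
      · exact h
      · exfalso; apply hz; rw [hψ, ← h, mul_zero, Real.zero_rpow (ne_of_gt hip)]
    have hSp : S ^ (1/p) ≠ 0 := ne_of_gt (Real.rpow_pos_of_pos hSpos _)
    have hconst : (∑ x ∈ A, m ^ p) ^ (1/p) = κ * S ^ (1/p) := by
      have hsum : ∑ x ∈ A, m ^ p = n * m ^ p := by
        rw [Finset.sum_const, nsmul_eq_mul]
      rw [hsum, Real.mul_rpow (le_of_lt hnpos) (Real.rpow_nonneg hmnn p),
        ← Real.rpow_mul hmnn, mul_one_div, div_self (ne_of_gt hp0), Real.rpow_one,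
        hκv, hψ, Real.mul_rpow (by positivity) hSnn, Real.inv_rpow (le_of_lt hnpos)]
      have hnp : (0:ℝ) < n ^ (1/p) := Real.rpow_pos_of_pos hnpos _
      field_simp [hSp]
    have hchain : T ^ (1/p) ≤ (1 + κ) * S ^ (1/p) := by
      calc T ^ (1/p) ≤ (∑ x ∈ A, (dist x c + m) ^ p) ^ (1/p) :=
            Real.rpow_le_rpow hTnn h1 (le_of_lt hip)
        _ ≤ S ^ (1/p) + κ * S ^ (1/p) := by rw [← hconst]; exact hmink
        _ = (1 + κ) * S ^ (1/p) := by ring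
    have hfin : T ≤ ((1 + κ) * S ^ (1/p)) ^ p := by
      have h4 := Real.rpow_le_rpow (Real.rpow_nonneg hTnn _) hchain (le_of_lt hp0)
      rwa [← Real.rpow_mul hTnn, one_div_mul_cancel (ne_of_gt hp0),
        Real.rpow_one] at h4
    calc T ≤ ((1 + κ) * S ^ (1/p)) ^ p := hfin
      _ = (1 + κ) ^ p * S := by
          rw [Real.mul_rpow (by positivity) (Real.rpow_nonneg hSnn _),
            ← Real.rpow_mul hSnn, one_div_mul_cancel (ne_of_gt hp0),
            Real.rpow_one]
end

section
/- Let f : 2^Y → R be a monotone non-increasing supermodular set function on a finite ground set Y. Then for any S, S* ⊆ Y with S* \ S nonempty, max_{y ∈ S* \ S} [f(S) − f(S ∪ {y})] ≥ (f(S) − f(S*)) / |S*|. -/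
theorem sum_gain_ge {Y : Type*} [DecidableEq Y]
    (f : Finset Y → ℝ)
    (hsuper : ∀ S T : Finset Y, S ⊆ T → ∀ y ∉ T,
      f S - f (insert y S) ≥ f T - f (insert y T)) :
    ∀ n (S T : Finset Y), S ⊆ T → (T \ S).card = n →
      ∑ y ∈ T \ S, (f S - f (insert y S)) ≥ f S - f T := by
  intro n
  induction n with
  | zero =>
    intro S T hST hcard
    have : T \ S = ∅ := Finset.card_eq_zero.mp hcard
    have hTS : T = S := by
      apply Finset.Subset.antisymm _ hST
      intro x hx
      by_contra hxS
      have hmem : x ∈ T \ S := Finset.mem_sdiff.mpr ⟨hx, hxS⟩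
      rw [this] at hmem
      exact absurd hmem (Finset.notMem_empty x)
    simp [this, hTS]
  | succ n ih =>
    intro S T hST hcard
    have hne : (T \ S).Nonempty := Finset.card_pos.mp (by omega)
    obtain ⟨y, hy⟩ := hne
    have hyT : y ∈ T := (Finset.mem_sdiff.mp hy).1
    have hyS : y ∉ S := (Finset.mem_sdiff.mp hy).2
    set S' := insert y S with hS'
    have hS'T : S' ⊆ T := Finset.insert_subset hyT hST
    have hsd : T \ S' = (T \ S).erase y := by
      ext z; simp [hS', Finset.mem_sdiff, Finset.mem_erase]; tauto
    have hcard' : (T \ S').card = n := by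
      rw [hsd, Finset.card_erase_of_mem hy, hcard]; rfl
    have hIH := ih S' T hS'T hcard'
    have hterm : ∀ z ∈ T \ S', f S - f (insert z S) ≥ f S' - f (insert z S') := by
      intro z hz
      have hzS' : z ∉ S' := (Finset.mem_sdiff.mp hz).2
      exact hsuper S S' (Finset.subset_insert _ _) z hzS'
    have hsum : ∑ z ∈ T \ S', (f S - f (insert z S)) ≥
        ∑ z ∈ T \ S', (f S' - f (insert z S')) :=
      Finset.sum_le_sum hterm
    have hsplit : ∑ z ∈ T \ S, (f S - f (insert z S)) =
        (f S - f (insert y S)) + ∑ z ∈ T \ S', (f S - f (insert z S)) := by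
      rw [hsd, ← Finset.add_sum_erase _ _ hy]
    rw [hsplit]
    have : (f S - f (insert y S)) + (f S' - f T) ≥ f S - f T := by
      simp [hS']
    linarith

theorem greedy_gain_supermodular {Y : Type*} [DecidableEq Y] [Fintype Y]
    (f : Finset Y → ℝ)
    (hmono : ∀ S T : Finset Y, S ⊆ T → f T ≤ f S)
    (hsuper : ∀ S T : Finset Y, S ⊆ T → ∀ y ∉ T,
      f S - f (insert y S) ≥ f T - f (insert y T))
    (S Sstar : Finset Y) (h : (Sstar \ S).Nonempty) :
    (Sstar \ S).sup' h (fun y => f S - f (insert y S)) ≥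
      (f S - f Sstar) / Sstar.card := by
  set M := (Sstar \ S).sup' h (fun y => f S - f (insert y S)) with hM
  obtain ⟨y0, hy0⟩ := h
  have hM0 : 0 ≤ M := by
    have h1 : f (insert y0 S) ≤ f S := hmono _ _ (Finset.subset_insert _ _)
    have h2 : f S - f (insert y0 S) ≤ M := hM ▸ Finset.le_sup' (fun y => f S - f (insert y S)) hy0
    linarith
  have hcardpos : (0:ℝ) < Sstar.card := by
    have : y0 ∈ Sstar := (Finset.mem_sdiff.mp hy0).1
    have := Finset.card_pos.mpr ⟨y0, this⟩
    exact_mod_cast this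
  rcases le_or_gt (f S - f Sstar) 0 with hle | hlt
  · calc (f S - f Sstar) / Sstar.card ≤ 0 := div_nonpos_of_nonpos_of_nonneg hle (le_of_lt hcardpos)
      _ ≤ M := hM0
  · rw [ge_iff_le, div_le_iff₀ hcardpos]
    have hsdiff : (S ∪ Sstar) \ S = Sstar \ S := by
      ext z; simp [Finset.mem_sdiff]; tauto
    have hsum := sum_gain_ge f hsuper ((S ∪ Sstar) \ S).card S (S ∪ Sstar)
      Finset.subset_union_left rfl
    rw [hsdiff] at hsum
    have hmono' : f (S ∪ Sstar) ≤ f Sstar := hmono _ _ Finset.subset_union_right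
    have hbound : ∑ z ∈ Sstar \ S, (f S - f (insert z S)) ≤ (Sstar \ S).card * M := by
      calc ∑ z ∈ Sstar \ S, (f S - f (insert z S))
          ≤ ∑ z ∈ Sstar \ S, M := Finset.sum_le_sum (fun z hz => hM ▸ Finset.le_sup' (fun y => f S - f (insert y S)) hz)
        _ = (Sstar \ S).card * M := by rw [Finset.sum_const, nsmul_eq_mul]
    have hcardle : ((Sstar \ S).card : ℝ) ≤ Sstar.card := by
      exact_mod_cast Finset.card_le_card (Finset.sdiff_subset)
    have : ((Sstar \ S).card : ℝ) * M ≤ Sstar.card * M :=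
      mul_le_mul_of_nonneg_right hcardle hM0
    nlinarith
end

section
/- Let X be a finite set partitioned into nonempty blocks A_1, ..., A_k, let Δ : X × Y → [0,∞), and φ_S(C) := Σ_{x∈S} min_{c∈C} Δ(x,c). Suppose C ⊆ Y is finite nonempty and Y' ⊆ Y is a finite nonempty candidate set such that for every j ∈ [k] there exists c ∈ Y' with φ_{A_j}({c}) ≤ γ · φ_{A_j}({c*_j}), where c*_1,...,c*_k ∈ Y are reference centers and γ ≥ 1. Then φ_X(C) − min_{c∈Y'} φ_X(C ∪ {c}) ≥ (1/k)(φ_X(C) − γ Σ_{j=1}^k φ_{A_j}({c*_j})). -/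
/-- Clustering cost of a point set `S` with a finite nonempty set of centers `C`. -/
noncomputable def clusterCost {α Y : Type*} (S : Finset α) (Δ : α → Y → ℝ)
    (C : Finset Y) (hC : C.Nonempty) : ℝ :=
  ∑ x ∈ S, C.inf' hC (Δ x)

theorem greedy_one_step {α Y : Type*} [DecidableEq α] [DecidableEq Y]
    (k : ℕ) (hk : 1 ≤ k)
    (X : Finset α) (A : Fin k → Finset α)
    (hAne : ∀ j, (A j).Nonempty)
    (hdisj : ∀ i j, i ≠ j → Disjoint (A i) (A j))
    (hcover : X = Finset.univ.biUnion A)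
    (Δ : α → Y → ℝ) (hΔ : ∀ x y, 0 ≤ Δ x y)
    (C : Finset Y) (hC : C.Nonempty)
    (Y' : Finset Y) (hY' : Y'.Nonempty)
    (cstar : Fin k → Y) (γ : ℝ) (hγ : 1 ≤ γ)
    (hcand : ∀ j, ∃ c ∈ Y', ∑ x ∈ A j, Δ x c ≤ γ * ∑ x ∈ A j, Δ x (cstar j)) :
    clusterCost X Δ C hC -
        Y'.inf' hY' (fun c => clusterCost X Δ (insert c C) (Finset.insert_nonempty c C)) ≥
      (1 / (k : ℝ)) *
        (clusterCost X Δ C hC - γ * ∑ j, ∑ x ∈ A j, Δ x (cstar j)) := by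
  choose c hcY hcost using hcand
  set f : Y → ℝ := fun c => clusterCost X Δ (insert c C) (Finset.insert_nonempty c C) with hf
  have hsplit : clusterCost X Δ C hC = ∑ j, clusterCost (A j) Δ C hC := by
    rw [clusterCost, hcover, Finset.sum_biUnion]
    · rfl
    · intro i _ j _ hij; exact hdisj i j hij
  have key : ∀ j, clusterCost X Δ C hC - f (c j)
      ≥ clusterCost (A j) Δ C hC - γ * ∑ x ∈ A j, Δ x (cstar j) := by
    intro j
    have hAsub : A j ⊆ X := by
      rw [hcover]; exact Finset.subset_biUnion_of_mem A (Finset.mem_univ j)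
    have h1 : f (c j) ≤ clusterCost X Δ C hC - clusterCost (A j) Δ C hC
        + ∑ x ∈ A j, Δ x (c j) := by
      have hx : clusterCost X Δ C hC - clusterCost (A j) Δ C hC
          = ∑ x ∈ X \ A j, C.inf' hC (Δ x) := by
        have := Finset.sum_sdiff (f := fun x => C.inf' hC (Δ x)) hAsub
        simp only [clusterCost]
        linarith
      have hy : f (c j) = ∑ x ∈ X \ A j, (insert (c j) C).inf' (Finset.insert_nonempty _ C) (Δ x)
          + ∑ x ∈ A j, (insert (c j) C).inf' (Finset.insert_nonempty _ C) (Δ x) := by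
        simp only [hf, clusterCost]
        exact (Finset.sum_sdiff hAsub).symm
      rw [hx, hy]
      apply add_le_add
      · exact Finset.sum_le_sum fun x _ => Finset.le_inf' hC (Δ x)
          fun b hb => Finset.inf'_le _ (Finset.mem_insert_of_mem hb)
      · exact Finset.sum_le_sum fun x _ => Finset.inf'_le _ (Finset.mem_insert_self _ _)
    have h2 := hcost j
    linarith
  have hmin : ∀ j, Y'.inf' hY' f ≤ f (c j) := fun j => Finset.inf'_le f (hcY j)
  set D := clusterCost X Δ C hC - Y'.inf' hY' f with hD
  have hsum : (k : ℝ) * D ≥ clusterCost X Δ C hC - γ * ∑ j, ∑ x ∈ A j, Δ x (cstar j) := by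
    have : ∑ j : Fin k, (clusterCost (A j) Δ C hC - γ * ∑ x ∈ A j, Δ x (cstar j))
        ≤ ∑ j : Fin k, D := by
      apply Finset.sum_le_sum
      intro j _
      have := key j
      have := hmin j
      linarith
    have hsc : ∑ j : Fin k, D = (k : ℝ) * D := by
      simp [Finset.sum_const, Finset.card_univ]
    rw [hsc] at this
    rw [Finset.sum_sub_distrib, ← hsplit, ← Finset.mul_sum] at this
    linarith
  have hkpos : (0 : ℝ) < k := by exact_mod_cast hk
  rw [ge_iff_le, one_div, inv_mul_le_iff₀ hkpos]
  linarith [hsum]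
end

section
/- Let X be a finite set partitioned into blocks A_1,...,A_k with reference costs φ_j := φ_{A_j}({c*_j}) ≥ 0, and let C be a current center set with per-block costs φ_{A_j}(C) ≥ 0. Suppose Σ_j φ_{A_j}(C) > γ(1+ε) Σ_j φ_j for some γ ≥ 1, ε > 0. If a random point x is drawn from X with probability proportional to its current cost min_{c∈C} Δ(x,c), then, letting m := argmax_j (φ_{A_j}(C) − γ φ_j), the probability that x lands in A_m is at least ε/(k(1+ε)). -/
theorem sampling_hits_worst_cluster {α Y : Type*} [DecidableEq α]
    (k : ℕ) (hk : 1 ≤ k)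
    (X : Finset α) (A : Fin k → Finset α)
    (hdisj : ∀ i j, i ≠ j → Disjoint (A i) (A j))
    (hcover : X = Finset.univ.biUnion A)
    (Δ : α → Y → ℝ) (hΔ : ∀ x y, 0 ≤ Δ x y)
    (C : Finset Y) (hC : C.Nonempty)
    (φ : Fin k → ℝ) (hφ : ∀ j, 0 ≤ φ j)
    (γ ε : ℝ) (hγ : 1 ≤ γ) (hε : 0 < ε)
    (hgap : ∑ j, ∑ x ∈ A j, C.inf' hC (Δ x) > γ * (1 + ε) * ∑ j, φ j)
    (m : Fin k)
    (hm : ∀ j, (∑ x ∈ A j, C.inf' hC (Δ x)) - γ * φ j ≤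
      (∑ x ∈ A m, C.inf' hC (Δ x)) - γ * φ m) :
    (∑ x ∈ A m, C.inf' hC (Δ x)) / (∑ x ∈ X, C.inf' hC (Δ x)) ≥
      ε / ((k : ℝ) * (1 + ε)) := by
  set S : Fin k → ℝ := fun j => ∑ x ∈ A j, C.inf' hC (Δ x) with hS
  have hXT : ∑ x ∈ X, C.inf' hC (Δ x) = ∑ j, S j := by
    rw [hcover]
    exact Finset.sum_biUnion (fun i _ j _ hij => hdisj i j hij)
  have hSnn : ∀ j, 0 ≤ S j := by
    intro j
    apply Finset.sum_nonneg
    intro x _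
    exact Finset.le_inf' hC _ (fun y _ => hΔ x y)
  have hΦ : 0 ≤ ∑ j, φ j := Finset.sum_nonneg fun j _ => hφ j
  have hT : (0:ℝ) < ∑ j, S j := lt_of_le_of_lt (mul_nonneg (mul_nonneg (le_trans zero_le_one hγ) (by linarith)) hΦ) hgap
  have hsum : (∑ j, S j) - γ * ∑ j, φ j ≤ (k : ℝ) * (S m - γ * φ m) := by
    have := Finset.sum_le_sum (fun j (_ : j ∈ Finset.univ) => hm j)
    simp only [← hS, Finset.sum_const, Finset.card_univ, Fintype.card_fin,
      nsmul_eq_mul, Finset.sum_sub_distrib, ← Finset.mul_sum] at this ⊢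
    linarith
  rw [hXT, ge_iff_le, div_le_div_iff₀ (by positivity) hT]
  have hk1 : (1:ℝ) ≤ (k:ℝ) := by exact_mod_cast hk
  nlinarith [mul_nonneg (mul_nonneg (le_trans zero_le_one hk1) (le_trans zero_le_one hγ)) (hφ m),
    mul_nonneg hε.le (hΦ.trans (by nlinarith : ∑ j, φ j ≤ γ * ∑ j, φ j))]
end
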